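/- A Banach algebra A is approximately amenable if and only if for every Banach A-bimodule X, every continuous derivation D : A → X** is approximately inner. -/

import Mathlib

/-! The dual `X*` is a bimodule retract of `X***`: the canonical embedding `X* → X***` has as
left inverse the adjoint `X*** → X*` of the canonical embedding `X → X**`, and both are bimodule
maps. A derivation into `X*` therefore lifts to `X***`, where it is approximately inner by the
hypothesis applied to `X*`, and the approximating net is pushed back to `X*`. -/

open ContinuousLinearMap Filter Topology

open ContinuousLinearMap Filter Topology

/-- A Banach `A`-bimodule: a complete normed `ℂ`-space with commuting continuous
left and right `A`-actions, jointly bounded and bilinear. -/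
structure BBimod (A : Type) [NonUnitalNormedRing A] [NormedSpace ℂ A] where
  carrier : Type
  [grp : NormedAddCommGroup carrier]
  [mod : NormedSpace ℂ carrier]
  [complete : CompleteSpace carrier]
  lsmul : A → carrier →L[ℂ] carrier
  rsmul : A → carrier →L[ℂ] carrier
  lsmul_add : ∀ a b, lsmul (a + b) = lsmul a + lsmul b
  rsmul_add : ∀ a b, rsmul (a + b) = rsmul a + rsmul b
  lsmul_smul : ∀ (c : ℂ) (a), lsmul (c • a) = c • lsmul a
  rsmul_smul : ∀ (c : ℂ) (a), rsmul (c • a) = c • rsmul a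
  lsmul_mul : ∀ a b, lsmul (a * b) = (lsmul a).comp (lsmul b)
  rsmul_mul : ∀ a b, rsmul (a * b) = (rsmul b).comp (rsmul a)
  lsmul_rsmul : ∀ a b, (lsmul a).comp (rsmul b) = (rsmul b).comp (lsmul a)
  bound : ∃ C : ℝ, ∀ a, ‖lsmul a‖ ≤ C * ‖a‖ ∧ ‖rsmul a‖ ≤ C * ‖a‖

attribute [instance] BBimod.grp BBimod.mod BBimod.complete

variable {A : Type} [NonUnitalNormedRing A] [NormedSpace ℂ A]

/-- The dual of a Banach bimodule, with the canonical dual actions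
`⟨u, Λ·a⟩ = ⟨a·u, Λ⟩` and `⟨u, a·Λ⟩ = ⟨u·a, Λ⟩`. -/
noncomputable def BBimod.dual (M : BBimod A) : BBimod A where
  carrier := M.carrier →L[ℂ] ℂ
  lsmul a := (compL ℂ M.carrier M.carrier ℂ).flip (M.rsmul a)
  rsmul a := (compL ℂ M.carrier M.carrier ℂ).flip (M.lsmul a)
  lsmul_add a b := by ext Λ x; simp [M.rsmul_add]
  rsmul_add a b := by ext Λ x; simp [M.lsmul_add]
  lsmul_smul c a := by ext Λ x; simp [M.rsmul_smul]
  rsmul_smul c a := by ext Λ x; simp [M.lsmul_smul]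
  lsmul_mul a b := by ext Λ x; simp [M.rsmul_mul]
  rsmul_mul a b := by ext Λ x; simp [M.lsmul_mul]
  lsmul_rsmul a b := by
    ext Λ x
    have h : M.lsmul b (M.rsmul a x) = M.rsmul a (M.lsmul b x) := by
      have := congrArg (fun T : M.carrier →L[ℂ] M.carrier => T x) (M.lsmul_rsmul b a)
      simpa using this
    simp [h]
  bound := by
    obtain ⟨C, hC⟩ := M.bound
    refine ⟨C, fun a => ⟨?_, ?_⟩⟩
    · refine opNorm_le_bound _ ?_ fun Λ => ?_
      · exact le_trans (norm_nonneg _) (hC a).2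
      · calc ‖Λ.comp (M.rsmul a)‖ ≤ ‖Λ‖ * ‖M.rsmul a‖ := opNorm_comp_le _ _
          _ ≤ (C * ‖a‖) * ‖Λ‖ := by
              rw [mul_comm]
              exact mul_le_mul_of_nonneg_right (hC a).2 (norm_nonneg _)
    · refine opNorm_le_bound _ ?_ fun Λ => ?_
      · exact le_trans (norm_nonneg _) (hC a).1
      · calc ‖Λ.comp (M.lsmul a)‖ ≤ ‖Λ‖ * ‖M.lsmul a‖ := opNorm_comp_le _ _
          _ ≤ (C * ‖a‖) * ‖Λ‖ := by
              rw [mul_comm]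
              exact mul_le_mul_of_nonneg_right (hC a).1 (norm_nonneg _)

variable (A) [IsScalarTower ℂ A A] [SMulCommClass ℂ A A] [CompleteSpace A]

/-- `A` as a Banach bimodule over itself. -/
noncomputable def BBimod.base : BBimod A where
  carrier := A
  lsmul a := ContinuousLinearMap.mul ℂ A a
  rsmul a := (ContinuousLinearMap.mul ℂ A).flip a
  lsmul_add a b := by ext x; simp [add_mul]
  rsmul_add a b := by ext x; simp [mul_add]
  lsmul_smul c a := by ext x; simp [smul_mul_assoc]
  rsmul_smul c a := by ext x; simp [mul_smul_comm]
  lsmul_mul a b := by ext x; simp [mul_assoc]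
  rsmul_mul a b := by ext x; simp [mul_assoc]
  lsmul_rsmul a b := by ext x; simp [mul_assoc]
  bound := by
    refine ⟨1, fun a => ⟨?_, ?_⟩⟩
    · simpa using ContinuousLinearMap.opNorm_mul_apply_le ℂ A a
    · refine le_trans (opNorm_le_bound _ (norm_nonneg a) fun x => ?_) (by simp)
      simpa [mul_comm] using norm_mul_le x a


/-- The `n`-th dual `A^(n)` of `A` as a Banach `A`-bimodule. -/
noncomputable def iterDual : ℕ → BBimod A
  | 0 => BBimod.base A
  | n + 1 => (iterDual n).dual

variable {A}

/-- `D` is a derivation from `A` into the Banach bimodule `M`. -/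
def IsDerivation (M : BBimod A) (D : A →L[ℂ] M.carrier) : Prop :=
  ∀ a b : A, D (a * b) = M.lsmul a (D b) + M.rsmul b (D a)

/-- `D` is an inner derivation. -/
def IsInner (M : BBimod A) (D : A →L[ℂ] M.carrier) : Prop :=
  ∃ x : M.carrier, ∀ a : A, D a = M.lsmul a x - M.rsmul a x

/-- `D` is approximately inner: there is a net `(x_i)` in `M` with
`D a = lim_i (a·x_i − x_i·a)` for every `a`. -/
def IsApproxInner (M : BBimod A) (D : A →L[ℂ] M.carrier) : Prop :=
  ∃ (ι : Type) (l : Filter ι) (x : ι → M.carrier), l.NeBot ∧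
    ∀ a : A, Tendsto (fun i => M.lsmul a (x i) - M.rsmul a (x i)) l (𝓝 (D a))

variable (A)

/-- `A` is weakly amenable. -/
def WeaklyAmenable : Prop :=
  ∀ D : A →L[ℂ] (iterDual A 1).carrier, IsDerivation (iterDual A 1) D → IsInner (iterDual A 1) D

/-- `A` is approximately `n`-weakly amenable. -/
def ApproxNWeaklyAmenable (n : ℕ) : Prop :=
  ∀ D : A →L[ℂ] (iterDual A n).carrier,
    IsDerivation (iterDual A n) D → IsApproxInner (iterDual A n) D

/-- `A` is `n`-weakly amenable. -/
def NWeaklyAmenable (n : ℕ) : Prop :=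
  ∀ D : A →L[ℂ] (iterDual A n).carrier,
    IsDerivation (iterDual A n) D → IsInner (iterDual A n) D

/-- `A` is approximately weakly amenable. -/
def ApproxWeaklyAmenable : Prop := ApproxNWeaklyAmenable A 1

/-- `A` is approximately amenable: every continuous derivation into the dual of a
Banach `A`-bimodule is approximately inner. -/
def ApproxAmenable : Prop :=
  ∀ (X : BBimod A) (D : A →L[ℂ] X.dual.carrier), IsDerivation X.dual D → IsApproxInner X.dual D

section

variable {A : Type} [NonUnitalNormedRing A] [NormedSpace ℂ A]

namespace BBimod

structure IsHom (M N : BBimod A) (T : M.carrier →L[ℂ] N.carrier) : Prop where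
  map_lsmul (a : A) (x : M.carrier) : T (M.lsmul a x) = N.lsmul a (T x)
  map_rsmul (a : A) (x : M.carrier) : T (M.rsmul a x) = N.rsmul a (T x)

noncomputable def inclusionInDoubleDual (M : BBimod A) : M.carrier →L[ℂ] M.dual.dual.carrier :=
  NormedSpace.inclusionInDoubleDual ℂ M.carrier

noncomputable def dualMap {M N : BBimod A} (T : M.carrier →L[ℂ] N.carrier) :
    N.dual.carrier →L[ℂ] M.dual.carrier :=
  precomp ℂ T

theorem isHom_inclusionInDoubleDual (M : BBimod A) :
    M.IsHom M.dual.dual M.inclusionInDoubleDual :=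
  ⟨fun _ _ => rfl, fun _ _ => rfl⟩

theorem IsHom.dualMap {M N : BBimod A} {T : M.carrier →L[ℂ] N.carrier} (hT : M.IsHom N T) :
    N.dual.IsHom M.dual (BBimod.dualMap T) :=
  ⟨fun a (Λ : N.carrier →L[ℂ] ℂ) => ext fun x => congrArg Λ (hT.map_rsmul a x).symm,
    fun a (Λ : N.carrier →L[ℂ] ℂ) => ext fun x => congrArg Λ (hT.map_lsmul a x).symm⟩

theorem dualMap_inclusionInDoubleDual_comp_inclusionInDoubleDual (M : BBimod A) :
    (dualMap M.inclusionInDoubleDual).comp M.dual.inclusionInDoubleDual =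
      ContinuousLinearMap.id ℂ M.dual.carrier :=
  rfl

end BBimod

theorem IsDerivation.comp {M N : BBimod A} {D : A →L[ℂ] M.carrier} (hD : IsDerivation M D)
    {T : M.carrier →L[ℂ] N.carrier} (hT : M.IsHom N T) : IsDerivation N (T.comp D) := by
  intro a b
  simp only [comp_apply, hD a b, map_add, hT.map_lsmul, hT.map_rsmul]

theorem IsApproxInner.comp {M N : BBimod A} {D : A →L[ℂ] M.carrier} (hD : IsApproxInner M D)
    {T : M.carrier →L[ℂ] N.carrier} (hT : M.IsHom N T) : IsApproxInner N (T.comp D) := by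
  obtain ⟨ι, l, x, hl, hx⟩ := hD
  refine ⟨ι, l, fun i => T (x i), hl, fun a => ?_⟩
  refine ((T.continuous.tendsto _).comp (hx a)).congr fun i => ?_
  simp only [Function.comp_apply, map_sub, hT.map_lsmul, hT.map_rsmul]

end

variable (A : Type) [NonUnitalNormedRing A] [NormedSpace ℂ A]
  [IsScalarTower ℂ A A] [SMulCommClass ℂ A A] [CompleteSpace A]

theorem approxAmenable_iff_derivations_into_double_dual
    : ApproxAmenable A ↔
      ∀ (X : BBimod A) (D : A →L[ℂ] X.dual.dual.carrier),
        IsDerivation X.dual.dual D → IsApproxInner X.dual.dual D := by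
  refine ⟨fun h X => h X.dual, fun h X D hD => ?_⟩
  have hlift := (h X.dual _ (hD.comp X.dual.isHom_inclusionInDoubleDual)).comp
    X.isHom_inclusionInDoubleDual.dualMap
  rwa [← comp_assoc, BBimod.dualMap_inclusionInDoubleDual_comp_inclusionInDoubleDual,
    id_comp] at hlift
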